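/- For all integers n ≥ k ≥ 2 there exists a k-dicritical digraph with exactly n vertices. -/

import Mathlib

/-- A (simple) digraph: a finite vertex set (of naturals) together with a finite
set of arcs between distinct vertices. -/
structure FDigraph where
  verts : Finset ℕ
  arcs : Finset (ℕ × ℕ)
  wf : ∀ a ∈ arcs, a.1 ∈ verts ∧ a.2 ∈ verts ∧ a.1 ≠ a.2

namespace FDigraph

/-- Smart constructor: keeps only the legal arcs. -/
def mk' (V : Finset ℕ) (A : Finset (ℕ × ℕ)) : FDigraph where
  verts := V
  arcs := A.filter fun a => a.1 ∈ V ∧ a.2 ∈ V ∧ a.1 ≠ a.2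
  wf := by
    intro a ha
    simp only [Finset.mem_filter] at ha
    exact ha.2

/-- A directed cycle, given as its (nonempty, duplicate-free) list of vertices:
every cyclically consecutive pair is an arc. -/
def IsDicycle (G : FDigraph) (l : List ℕ) : Prop :=
  l ≠ [] ∧ l.Nodup ∧ ∀ p ∈ l.zip (l.rotate 1), p ∈ G.arcs

/-- A set of vertices is acyclic if it contains no directed cycle. -/
def AcyclicOn (G : FDigraph) (S : Set ℕ) : Prop :=
  ¬ ∃ l, G.IsDicycle l ∧ ∀ v ∈ l, v ∈ S

/-- A `k`-dicolouring: colours `0, …, k-1`, every colour class acyclic. -/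
def IsDicolouring (G : FDigraph) (k : ℕ) (φ : ℕ → ℕ) : Prop :=
  (∀ v ∈ G.verts, φ v < k) ∧ ∀ c, G.AcyclicOn {v | φ v = c}

/-- The dichromatic number. -/
noncomputable def dichi (G : FDigraph) : ℕ := sInf {k | ∃ φ, G.IsDicolouring k φ}

/-- Subdigraph relation. -/
def Subdigraph (H G : FDigraph) : Prop := H.verts ⊆ G.verts ∧ H.arcs ⊆ G.arcs

/-- `G` is `k`-dicritical. -/
def Dicritical (G : FDigraph) (k : ℕ) : Prop :=
  G.dichi = k ∧ ∀ H, Subdigraph H G → H ≠ G → H.dichi ≤ k - 1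

/-- Induced subdigraph on a finite set of vertices. -/
def induce (G : FDigraph) (S : Finset ℕ) : FDigraph := mk' (G.verts ∩ S) G.arcs

def outDeg (G : FDigraph) (v : ℕ) : ℕ := (G.arcs.filter fun a => a.1 = v).card
def inDeg (G : FDigraph) (v : ℕ) : ℕ := (G.arcs.filter fun a => a.2 = v).card
def deg (G : FDigraph) (v : ℕ) : ℕ := G.outDeg v + G.inDeg v

/-- Weak adjacency: an arc in either direction. -/
def wadj (G : FDigraph) (u v : ℕ) : Prop := (u, v) ∈ G.arcs ∨ (v, u) ∈ G.arcs

/-- Weak reachability. -/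
def WReach (G : FDigraph) : ℕ → ℕ → Prop := Relation.ReflTransGen G.wadj

/-- A digraph is connected when its underlying graph is connected
(the empty digraph counts as connected). -/
def Connected (G : FDigraph) : Prop := ∀ u ∈ G.verts, ∀ v ∈ G.verts, G.WReach u v

/-- The set of connected components. -/
def components (G : FDigraph) : Set (Set ℕ) :=
  {C | ∃ v ∈ G.verts, C = {u | u ∈ G.verts ∧ G.WReach v u}}

/-- The number of connected components. -/
noncomputable def numComponents (G : FDigraph) : ℕ := G.components.ncard

/-- Isomorphism of digraphs. -/
def Iso (G H : FDigraph) : Prop :=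
  ∃ f : ℕ → ℕ, Set.BijOn f ↑G.verts ↑H.verts ∧
    ∀ u ∈ G.verts, ∀ v ∈ G.verts, ((u, v) ∈ G.arcs ↔ (f u, f v) ∈ H.arcs)

/-- The bidirected (complete) digraph `↔K_n`. -/
def completeD (n : ℕ) : FDigraph := mk' (Finset.range n) (Finset.range n ×ˢ Finset.range n)

/-- The directed cycle `C⃗_n`. -/
def dirCycle (n : ℕ) : FDigraph :=
  mk' (Finset.range n)
    ((Finset.range n ×ˢ Finset.range n).filter fun a => a.2 = (a.1 + 1) % n)

/-- The bidirected cycle `↔C_n`. -/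
def biCycle (n : ℕ) : FDigraph :=
  mk' (Finset.range n)
    ((Finset.range n ×ˢ Finset.range n).filter fun a =>
      a.2 = (a.1 + 1) % n ∨ a.1 = (a.2 + 1) % n)

/-- The Dirac join of `↔K_{k-2}` (on `{0,…,k-3}`) and the directed triangle
`C⃗_3` (on `{k-2, k-1, k}`). -/
def diracJoinExample (k : ℕ) : FDigraph :=
  mk' (Finset.range (k + 1))
    ((Finset.range (k + 1) ×ˢ Finset.range (k + 1)).filter fun a =>
      a.1 < k - 2 ∨ a.2 < k - 2 ∨ a.2 = (if a.1 = k then k - 2 else a.1 + 1))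

end FDigraph

/-!
The directed cycle `C⃗_m` (`m ≥ 2`) is `2`-dicritical: it is a dicycle, and deleting any arc
leaves a path. Joining a new vertex `v` by digons to every vertex of a `k`-dicritical digraph `G`
gives a `(k + 1)`-dicritical digraph. Indeed `v` cannot share its colour with any other vertex, so
the dichromatic number goes up by one; and as there are no isolated vertices it suffices to
colour the digraph minus one arc with `k` colours: a `(k - 1)`-dicolouring of `G` minus that arc
(if it lies in `G`), or of `G - u` (if it joins `v` and `u`), extends by the new colour class
`{v}`, resp. `{u, v}`. Adding `k - 2` such vertices to `C⃗_(n-k+2)` proves the theorem.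
-/

namespace FDigraph

variable {G H : FDigraph} {k : ℕ} {φ : ℕ → ℕ}

lemma mem_mk'_arcs {V : Finset ℕ} {A : Finset (ℕ × ℕ)} {a : ℕ × ℕ} :
    a ∈ (mk' V A).arcs ↔ a ∈ A ∧ a.1 ∈ V ∧ a.2 ∈ V ∧ a.1 ≠ a.2 :=
  Finset.mem_filter

section Acyclic

lemma IsDicycle.exists_arc_mem {l : List ℕ} (hl : G.IsDicycle l) {v : ℕ} (hv : v ∈ l) :
    ∃ w ∈ l, (v, w) ∈ G.arcs := by
  obtain ⟨i, hi, rfl⟩ := List.getElem_of_mem hv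
  have hi' : i < (l.zip (l.rotate 1)).length := by simpa using hi
  refine ⟨(l.rotate 1)[i]'(by simpa using hi), List.mem_rotate.1 (List.getElem_mem _), ?_⟩
  simpa [List.getElem_zip] using hl.2.2 _ (List.getElem_mem hi')

lemma IsDicycle.mono {l : List ℕ} (hl : G.IsDicycle l)
    (harcs : ∀ x ∈ l, ∀ y ∈ l, (x, y) ∈ G.arcs → (x, y) ∈ H.arcs) : H.IsDicycle l := by
  refine ⟨hl.1, hl.2.1, fun p hp => ?_⟩
  obtain ⟨hx, hy⟩ := List.of_mem_zip hp
  exact harcs _ hx _ (List.mem_rotate.1 hy) (hl.2.2 p hp)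

lemma IsDicycle.mem_verts {l : List ℕ} (hl : G.IsDicycle l) {v : ℕ} (hv : v ∈ l) :
    v ∈ G.verts :=
  let ⟨_, _, hvw⟩ := hl.exists_arc_mem hv
  (G.wf _ hvw).1

lemma isDicycle_pair {x y : ℕ} (hxy : (x, y) ∈ G.arcs) (hyx : (y, x) ∈ G.arcs) :
    G.IsDicycle [x, y] := by
  have hne := (G.wf _ hxy).2.2
  refine ⟨List.cons_ne_nil _ _, by simpa using hne, ?_⟩
  simp [List.rotate_cons_succ, hxy, hyx]

lemma AcyclicOn.mono {S T : Set ℕ} (hH : H.AcyclicOn T) (hST : ∀ x ∈ S, x ∈ G.verts → x ∈ T)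
    (harcs : ∀ x ∈ S, ∀ y ∈ S, (x, y) ∈ G.arcs → (x, y) ∈ H.arcs) : G.AcyclicOn S := by
  rintro ⟨l, hl, hlS⟩
  exact hH ⟨l, hl.mono fun x hx y hy => harcs x (hlS x hx) y (hlS y hy),
    fun v hv => hST v (hlS v hv) (hl.mem_verts hv)⟩

-- A vertex of maximal weight on a dicycle would have an out-neighbour of larger weight.
lemma acyclicOn_of_weight {S : Set ℕ} (w : ℕ → ℕ)
    (hw : ∀ u v, (u, v) ∈ G.arcs → u ∈ S → v ∈ S → w u < w v) : G.AcyclicOn S := by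
  rintro ⟨l, hl, hlS⟩
  obtain ⟨v, hv, hmax⟩ := l.toFinset.exists_max_image w
    (List.toFinset_nonempty_iff l |>.2 hl.1)
  rw [List.mem_toFinset] at hv
  obtain ⟨u, hu, hvu⟩ := hl.exists_arc_mem hv
  exact (hw v u hvu (hlS v hv) (hlS u hu)).not_ge (hmax u (List.mem_toFinset.2 hu))

lemma acyclicOn_of_subsingleton {S : Set ℕ} (hS : ∀ x ∈ S ∩ G.verts, ∀ y ∈ S ∩ G.verts, x = y) :
    G.AcyclicOn S :=
  acyclicOn_of_weight id fun u v huv hu hv => by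
    have := G.wf _ huv
    exact absurd (hS u ⟨hu, this.1⟩ v ⟨hv, this.2.1⟩) this.2.2

end Acyclic

section Dichromatic

lemma IsDicolouring.mono (hφ : G.IsDicolouring k φ) (hH : H.Subdigraph G) :
    H.IsDicolouring k φ :=
  ⟨fun v hv => hφ.1 v (hH.1 hv), fun c =>
    (hφ.2 c).mono (fun _ hx _ => hx) fun _ _ _ _ hxy => hH.2 hxy⟩

lemma IsDicolouring.of_le {j : ℕ} (hφ : G.IsDicolouring j φ) (hjk : j ≤ k) :
    G.IsDicolouring k φ :=
  ⟨fun v hv => (hφ.1 v hv).trans_le hjk, hφ.2⟩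

lemma IsDicolouring.ne_of_digon (hφ : G.IsDicolouring k φ) {x y : ℕ} (hxy : (x, y) ∈ G.arcs)
    (hyx : (y, x) ∈ G.arcs) : φ x ≠ φ y :=
  fun h => hφ.2 (φ y) ⟨[x, y], isDicycle_pair hxy hyx, by simp [h]⟩

lemma exists_isDicolouring (G : FDigraph) : ∃ k φ, G.IsDicolouring k φ :=
  ⟨G.verts.sup id + 1, id, fun _ hv => Nat.lt_succ_of_le (Finset.le_sup (f := id) hv),
    fun _ => acyclicOn_of_subsingleton fun _ hx _ hy => hx.1.trans hy.1.symm⟩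

lemma exists_isDicolouring_dichi (G : FDigraph) : ∃ φ, G.IsDicolouring G.dichi φ :=
  Nat.sInf_mem G.exists_isDicolouring

lemma dichi_le (hφ : G.IsDicolouring k φ) : G.dichi ≤ k :=
  Nat.sInf_le ⟨φ, hφ⟩

lemma le_dichi (h : ∀ j φ, G.IsDicolouring j φ → k ≤ j) : k ≤ G.dichi :=
  let ⟨φ, hφ⟩ := G.exists_isDicolouring_dichi
  h _ φ hφ

lemma exists_isDicolouring_of_dichi_le (h : G.dichi ≤ k) : ∃ φ, G.IsDicolouring k φ :=
  let ⟨φ, hφ⟩ := G.exists_isDicolouring_dichi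
  ⟨φ, hφ.of_le h⟩

lemma dichi_mono (hH : H.Subdigraph G) : H.dichi ≤ G.dichi :=
  let ⟨_, hφ⟩ := G.exists_isDicolouring_dichi
  dichi_le (hφ.mono hH)

lemma IsDicolouring.extend {K : FDigraph} (hφ : K.IsDicolouring k φ)
    (harcs : ∀ x ∈ K.verts, ∀ y ∈ K.verts, (x, y) ∈ H.arcs → (x, y) ∈ K.arcs)
    (hout : H.AcyclicOn {x | x ∉ K.verts}) :
    H.IsDicolouring (k + 1) (fun x => if x ∈ K.verts then φ x else k) := by
  refine ⟨fun x _ => ?_, fun c => ?_⟩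
  · dsimp only
    split_ifs with hx
    · exact (hφ.1 x hx).trans (Nat.lt_succ_self k)
    · exact Nat.lt_succ_self k
  by_cases hc : c = k
  · subst hc
    refine hout.mono (fun x hx _ hxK => ?_) fun _ _ _ _ => id
    simp only [Set.mem_ofPred_eq, if_pos hxK] at hx
    exact (hφ.1 x hxK).ne hx
  · have hclass : {x | (if x ∈ K.verts then φ x else k) = c} ⊆ {x | x ∈ K.verts ∧ φ x = c} :=
      fun x hx => by
        by_cases hxK : x ∈ K.verts
        · simp_all
        · simp_all [eq_comm]
    refine (hφ.2 c).mono (fun x hx _ => (hclass hx).2) fun x hx y hy =>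
      harcs x (hclass hx).1 y (hclass hy).1

end Dichromatic

section Deletion

lemma deg_pos_iff {v : ℕ} : 0 < G.deg v ↔ ∃ a ∈ G.arcs, a.1 = v ∨ a.2 = v := by
  simp only [deg, outDeg, inDeg, Nat.add_pos_iff_pos_or_pos, Finset.card_pos,
    Finset.filter_nonempty_iff]
  constructor
  · rintro (⟨a, ha, h⟩ | ⟨a, ha, h⟩) <;> exact ⟨a, ha, by tauto⟩
  · rintro ⟨a, ha, h | h⟩
    exacts [Or.inl ⟨a, ha, h⟩, Or.inr ⟨a, ha, h⟩]

def deleteArc (G : FDigraph) (a : ℕ × ℕ) : FDigraph := mk' G.verts (G.arcs.erase a)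

def deleteVert (G : FDigraph) (u : ℕ) : FDigraph := mk' (G.verts.erase u) G.arcs

lemma mem_deleteArc_arcs {a b : ℕ × ℕ} : b ∈ (G.deleteArc a).arcs ↔ b ≠ a ∧ b ∈ G.arcs := by
  rw [deleteArc, mem_mk'_arcs, Finset.mem_erase]
  exact ⟨fun h => h.1, fun h => ⟨h, G.wf b h.2⟩⟩

lemma mem_deleteVert_arcs {u : ℕ} {b : ℕ × ℕ} :
    b ∈ (G.deleteVert u).arcs ↔ b ∈ G.arcs ∧ b.1 ≠ u ∧ b.2 ≠ u := by
  rw [deleteVert, mem_mk'_arcs, Finset.mem_erase, Finset.mem_erase]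
  constructor
  · exact fun h => ⟨h.1, h.2.1.1, h.2.2.1.1⟩
  · exact fun h => ⟨h.1, ⟨h.2.1, (G.wf b h.1).1⟩, ⟨h.2.2, (G.wf b h.1).2.1⟩, (G.wf b h.1).2.2⟩

lemma deleteArc_subdigraph (a : ℕ × ℕ) : (G.deleteArc a).Subdigraph G :=
  ⟨subset_rfl, fun _ hb => (mem_deleteArc_arcs.1 hb).2⟩

lemma deleteArc_ne {a : ℕ × ℕ} (ha : a ∈ G.arcs) : G.deleteArc a ≠ G := by
  intro h
  have : a ∈ (G.deleteArc a).arcs := by rwa [h]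
  exact (mem_deleteArc_arcs.1 this).1 rfl

lemma deleteVert_subdigraph (u : ℕ) : (G.deleteVert u).Subdigraph G :=
  ⟨Finset.erase_subset u G.verts, fun _ hb => (mem_deleteVert_arcs.1 hb).1⟩

lemma deleteVert_ne {u : ℕ} (hu : u ∈ G.verts) : G.deleteVert u ≠ G := by
  intro h
  have : u ∈ (G.deleteVert u).verts := by rwa [h]
  exact Finset.notMem_erase u G.verts this

lemma acyclicOn_deleteArc_pair (p q : ℕ) : (G.deleteArc (p, q)).AcyclicOn {p, q} :=
  acyclicOn_of_weight (fun z => if z = p then 1 else 0) fun x y hxy hx hy => by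
    obtain ⟨hne, hxyG⟩ := mem_deleteArc_arcs.1 hxy
    have hxy' := (G.wf _ hxyG).2.2
    simp only [Set.mem_insert_iff, Set.mem_singleton_iff] at hx hy
    simp only [ne_eq, Prod.mk.injEq] at hne hxy'
    split_ifs <;> omega

lemma exists_arc_notMem_of_ne (hdeg : ∀ v ∈ G.verts, 0 < G.deg v) (hH : H.Subdigraph G)
    (hne : H ≠ G) : ∃ a ∈ G.arcs, a ∉ H.arcs := by
  by_contra! h
  have harcs : H.arcs = G.arcs := hH.2.antisymm h
  have hverts : H.verts = G.verts := hH.1.antisymm fun v hv => by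
    obtain ⟨a, ha, rfl | rfl⟩ := deg_pos_iff.1 (hdeg v hv)
    exacts [(H.wf a (h a ha)).1, (H.wf a (h a ha)).2.1]
  cases H
  cases G
  simp_all

lemma dicritical_of_dichi_deleteArc (hdeg : ∀ v ∈ G.verts, 0 < G.deg v) (hχ : G.dichi = k)
    (hdel : ∀ a ∈ G.arcs, (G.deleteArc a).dichi ≤ k - 1) : G.Dicritical k := by
  refine ⟨hχ, fun H hH hne => ?_⟩
  obtain ⟨a, ha, haH⟩ := exists_arc_notMem_of_ne hdeg hH hne
  have hHa : H.Subdigraph (G.deleteArc a) :=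
    ⟨hH.1, fun b hb => mem_deleteArc_arcs.2 ⟨fun hba => haH (hba ▸ hb), hH.2 hb⟩⟩
  exact (dichi_mono hHa).trans (hdel a ha)

lemma Dicritical.exists_isDicolouring (hG : G.Dicritical k) (hH : H.Subdigraph G)
    (hne : H ≠ G) : ∃ φ, H.IsDicolouring (k - 1) φ :=
  exists_isDicolouring_of_dichi_le (hG.2 H hH hne)

end Deletion

section Universal

def addUniversal (G : FDigraph) (v : ℕ) : FDigraph :=
  mk' (insert v G.verts) (G.arcs ∪ G.verts ×ˢ {v} ∪ {v} ×ˢ G.verts)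

variable {v : ℕ}

lemma mem_addUniversal_arcs (hv : v ∉ G.verts) {x y : ℕ} :
    (x, y) ∈ (G.addUniversal v).arcs ↔
      (x, y) ∈ G.arcs ∨ x ∈ G.verts ∧ y = v ∨ x = v ∧ y ∈ G.verts := by
  have := G.wf (x, y)
  simp only [addUniversal, mem_mk'_arcs, Finset.mem_union, Finset.mem_product,
    Finset.mem_singleton, Finset.mem_insert]
  aesop

lemma subdigraph_addUniversal (hv : v ∉ G.verts) : G.Subdigraph (G.addUniversal v) :=
  ⟨Finset.subset_insert v G.verts, fun _ ha => (mem_addUniversal_arcs hv).2 (Or.inl ha)⟩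

-- Permuting colours so that `v` gets the last one leaves `k - 1` colours for `G`.
lemma IsDicolouring.of_addUniversal (hv : v ∉ G.verts)
    (hφ : (G.addUniversal v).IsDicolouring k φ) :
    G.IsDicolouring (k - 1) (Equiv.swap (φ v) (k - 1) ∘ φ) := by
  have hvk : φ v < k := hφ.1 v (Finset.mem_insert_self v G.verts)
  have hφG := hφ.mono (subdigraph_addUniversal hv)
  refine ⟨fun u hu => ?_, fun c => ?_⟩
  · have hne : φ u ≠ φ v := hφ.ne_of_digon ((mem_addUniversal_arcs hv).2 (by tauto))
      ((mem_addUniversal_arcs hv).2 (by tauto))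
    have huk := hφG.1 u hu
    simp only [Function.comp_apply, Equiv.swap_apply_def]
    split_ifs <;> omega
  · convert hφG.2 (Equiv.swap (φ v) (k - 1) c) using 2
    simp [Equiv.swap_apply_eq_iff]

lemma acyclicOn_notMem_addUniversal :
    (G.addUniversal v).AcyclicOn {x | x ∉ G.verts} :=
  acyclicOn_of_subsingleton fun x hx y hy => by
    simp only [Set.mem_inter_iff, Set.mem_ofPred_eq, Finset.mem_coe, addUniversal,
      mk', Finset.mem_insert] at hx hy
    rw [hx.2.resolve_right hx.1, hy.2.resolve_right hy.1]

lemma dichi_addUniversal (hv : v ∉ G.verts) : (G.addUniversal v).dichi = G.dichi + 1 := by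
  apply le_antisymm
  · obtain ⟨φ, hφ⟩ := G.exists_isDicolouring_dichi
    refine dichi_le (hφ.extend (fun x hx y hy hxy => ?_) acyclicOn_notMem_addUniversal)
    rcases (mem_addUniversal_arcs hv).1 hxy with h | ⟨-, rfl⟩ | ⟨rfl, -⟩
    exacts [h, absurd hy hv, absurd hx hv]
  · refine le_dichi fun j ψ hψ => ?_
    have hj : 0 < j := (hψ.1 v (Finset.mem_insert_self v G.verts)).pos
    have := dichi_le (hψ.of_addUniversal hv)
    omega

lemma dichi_deleteArc_addUniversal_of_mem_arcs (hG : G.Dicritical k) (hv : v ∉ G.verts)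
    {a : ℕ × ℕ} (ha : a ∈ G.arcs) : ((G.addUniversal v).deleteArc a).dichi ≤ k - 1 + 1 := by
  obtain ⟨φ, hφ⟩ := hG.exists_isDicolouring (deleteArc_subdigraph a) (deleteArc_ne ha)
  refine dichi_le (hφ.extend (fun x hx y hy hxy => ?_) ?_)
  · obtain ⟨hxya, hxy⟩ := mem_deleteArc_arcs.1 hxy
    refine mem_deleteArc_arcs.2 ⟨hxya, ?_⟩
    rcases (mem_addUniversal_arcs hv).1 hxy with h | ⟨-, rfl⟩ | ⟨rfl, -⟩
    exacts [h, absurd hy hv, absurd hx hv]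
  · exact (acyclicOn_notMem_addUniversal (G := G)).mono (fun x hx _ => hx)
      fun x _ y _ hxy => (mem_deleteArc_arcs.1 hxy).2

-- `u` joins `v` in the new colour class; the two are now joined by a single arc.
lemma dichi_deleteArc_addUniversal_of_mem_pair (hG : G.Dicritical k) (hv : v ∉ G.verts)
    {u : ℕ} (hu : u ∈ G.verts) {a : ℕ × ℕ} (ha : a = (u, v) ∨ a = (v, u)) :
    ((G.addUniversal v).deleteArc a).dichi ≤ k - 1 + 1 := by
  obtain ⟨φ, hφ⟩ := hG.exists_isDicolouring (deleteVert_subdigraph u) (deleteVert_ne hu)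
  refine dichi_le (hφ.extend (fun x hx y hy hxy => ?_) ?_)
  · have hx' := Finset.mem_erase.1 hx
    have hy' := Finset.mem_erase.1 hy
    refine mem_deleteVert_arcs.2 ⟨?_, hx'.1, hy'.1⟩
    rcases (mem_addUniversal_arcs hv).1 (mem_deleteArc_arcs.1 hxy).2 with h | ⟨-, rfl⟩ | ⟨rfl, -⟩
    exacts [h, absurd hy'.2 hv, absurd hx'.2 hv]
  · rcases ha with rfl | rfl
    all_goals
      refine (acyclicOn_deleteArc_pair _ _).mono (fun x hx hxV => ?_) fun _ _ _ _ => id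
      simp only [deleteArc, deleteVert, addUniversal, mk', Finset.mem_insert, Finset.mem_erase,
        Set.mem_ofPred_eq] at hx hxV
      simp only [Set.mem_insert_iff, Set.mem_singleton_iff]
      tauto

theorem Dicritical.addUniversal (hG : G.Dicritical k) (hk : 0 < k) (hv : v ∉ G.verts) :
    (G.addUniversal v).Dicritical (k + 1) := by
  obtain ⟨u, hu⟩ : G.verts.Nonempty := by
    rw [Finset.nonempty_iff_ne_empty]
    intro h
    have : G.dichi ≤ 0 := dichi_le (φ := fun _ => 0)
      ⟨by simp [h], fun _ => acyclicOn_of_subsingleton (by simp [h])⟩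
    exact hk.ne' (hG.1 ▸ Nat.le_zero.1 this)
  refine dicritical_of_dichi_deleteArc (fun x hx => deg_pos_iff.2 ?_)
    (by rw [dichi_addUniversal hv, hG.1]) ?_
  · rcases Finset.mem_insert.1 hx with rfl | hx
    · exact ⟨(x, u), (mem_addUniversal_arcs hv).2 (by tauto), Or.inl rfl⟩
    · exact ⟨(x, v), (mem_addUniversal_arcs hv).2 (by tauto), Or.inl rfl⟩
  · rintro ⟨x, y⟩ hxy
    rw [show k + 1 - 1 = k - 1 + 1 by omega]
    rcases (mem_addUniversal_arcs hv).1 hxy with h | ⟨hx, rfl⟩ | ⟨rfl, hy⟩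
    · exact dichi_deleteArc_addUniversal_of_mem_arcs hG hv h
    · exact dichi_deleteArc_addUniversal_of_mem_pair hG hv hx (Or.inl rfl)
    · exact dichi_deleteArc_addUniversal_of_mem_pair hG hv hy (Or.inr rfl)

end Universal

section DirectedCycle

variable {m : ℕ}

lemma mem_dirCycle_arcs (hm : 2 ≤ m) {x y : ℕ} :
    (x, y) ∈ (dirCycle m).arcs ↔ x < m ∧ (y = x + 1 ∧ y < m ∨ x + 1 = m ∧ y = 0) := by
  simp only [dirCycle, mem_mk'_arcs, Finset.mem_filter, Finset.mem_product, Finset.mem_range]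
  by_cases hx : x < m
  · obtain h | h : x + 1 < m ∨ x + 1 = m := by omega
    · rw [Nat.mod_eq_of_lt h]
      omega
    · rw [h, Nat.mod_self]
      omega
  · simp [hx]

lemma succ_mod_mem_dirCycle_arcs (hm : 2 ≤ m) {i : ℕ} (hi : i < m) :
    (i, (i + 1) % m) ∈ (dirCycle m).arcs := by
  rw [mem_dirCycle_arcs hm]
  obtain h | h : i + 1 < m ∨ i + 1 = m := by omega
  · rw [Nat.mod_eq_of_lt h]
    omega
  · rw [h, Nat.mod_self]
    omega

lemma isDicycle_dirCycle (hm : 2 ≤ m) : (dirCycle m).IsDicycle (List.range m) := by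
  refine ⟨by simp; omega, List.nodup_range, fun p hp => ?_⟩
  obtain ⟨i, hi, rfl⟩ := List.getElem_of_mem hp
  have him : i < m := by simpa using hi
  simpa [List.getElem_zip, List.getElem_rotate] using succ_mod_mem_dirCycle_arcs hm him

-- Cut open after `i`, the cycle is a path starting at `i + 1`.
lemma acyclicOn_deleteArc_dirCycle (hm : 2 ≤ m) {a : ℕ × ℕ} (ha : a ∈ (dirCycle m).arcs) :
    ((dirCycle m).deleteArc a).AcyclicOn Set.univ := by
  obtain ⟨i, j⟩ := a
  refine acyclicOn_of_weight (fun x => if x ≤ i then x + m else x) fun x y hxy _ _ => ?_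
  obtain ⟨hne, hxy⟩ := mem_deleteArc_arcs.1 hxy
  rw [mem_dirCycle_arcs hm] at ha hxy
  simp only [ne_eq, Prod.mk.injEq] at hne
  split_ifs <;> omega

theorem dirCycle_dicritical (hm : 2 ≤ m) : (dirCycle m).Dicritical 2 := by
  refine dicritical_of_dichi_deleteArc (fun x hx => deg_pos_iff.2
    ⟨_, succ_mod_mem_dirCycle_arcs hm (Finset.mem_range.1 hx), Or.inl rfl⟩)
    (le_antisymm ?_ ?_) fun a ha => ?_
  · refine dichi_le (φ := fun x => if x = 0 then 1 else 0)
      ⟨fun x _ => by dsimp only; split_ifs <;> omega, fun c => acyclicOn_of_weight id fun x y hxy hx hy => ?_⟩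
    simp only [Set.mem_ofPred_eq] at hx hy
    rw [mem_dirCycle_arcs hm] at hxy
    split_ifs at hx hy <;> simp only [id] <;> omega
  · refine le_dichi fun j ψ hψ => ?_
    by_contra! hj
    have h0 := hψ.1 0 (Finset.mem_range.2 (by omega))
    refine hψ.2 (ψ 0) ⟨List.range m, isDicycle_dirCycle hm, fun x hx => ?_⟩
    have hx := hψ.1 x (Finset.mem_range.2 (List.mem_range.1 hx))
    show ψ x = ψ 0
    omega
  · exact dichi_le (φ := fun _ => 0) ⟨fun _ _ => Nat.zero_lt_one, fun _ =>
      (acyclicOn_deleteArc_dirCycle hm ha).mono (fun _ _ _ => trivial) fun _ _ _ _ => id⟩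

end DirectedCycle

theorem exists_dicritical_card_eq_add (m s : ℕ) (hm : 2 ≤ m) :
    ∃ G : FDigraph, G.Dicritical (s + 2) ∧ G.verts.card = m + s := by
  induction s with
  | zero => exact ⟨dirCycle m, dirCycle_dicritical hm, Finset.card_range m⟩
  | succ s ih =>
    obtain ⟨G, hG, hcard⟩ := ih
    obtain ⟨v, hv⟩ := Infinite.exists_notMem_finset G.verts
    refine ⟨G.addUniversal v, hG.addUniversal (Nat.succ_pos _) hv, ?_⟩
    rw [addUniversal, mk', Finset.card_insert_of_notMem hv, hcard]
    rfl

end FDigraph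

/-- for all `n ≥ k ≥ 2` there is a `k`-dicritical digraph on `n`
vertices. -/
theorem exists_dicritical (k n : ℕ) (hk : 2 ≤ k) (hn : k ≤ n) :
    ∃ G : FDigraph, G.Dicritical k ∧ G.verts.card = n := by
  obtain ⟨s, rfl⟩ : ∃ s, k = s + 2 := ⟨k - 2, by omega⟩
  obtain ⟨m, rfl⟩ : ∃ m, n = m + 2 + s := ⟨n - (s + 2), by omega⟩
  exact FDigraph.exists_dicritical_card_eq_add (m + 2) s (by omega)
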